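/- arXiv:1507.03269 — 4 statements merged into one kernel-verified Lean document; each statement's English description precedes it below -/
import Mathlib

section
/- Let n ∈ ℕ, λ ≥ 0, and let f be a homogeneous degree-3 real polynomial in x = (x_1, …, x_n). Suppose f is λ-bounded, i.e. there exist n×n real matrices A_1, …, A_n with f(x) = ∑_i x_i · xᵀA_i x and an n²×n² real matrix M with ⟨x⊗x, M(x⊗x)⟩ = ‖x‖⁴ for all x ∈ ℝⁿ, such that ∑_i A_i ⊗ A_i ⪯ λ²·M in the Loewner order (⊗ the Kronecker product). Then every degree-4 pseudo-expectation Ẽ on ℝⁿ satisfies Ẽ[f] ≤ λ·(Ẽ[‖x‖⁴])^{3/4}. In particular, f(v) ≤ λ for every unit vector v ∈ ℝⁿ. -/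
open Matrix MvPolynomial
open scoped Kronecker

noncomputable section

/-- The polynomial `‖x‖² = ∑ i, x i ^ 2`. -/
def sumSq (n : ℕ) : MvPolynomial (Fin n) ℝ := ∑ i, X i ^ 2

/-- A degree-4 pseudo-expectation: a linear functional on polynomials with
`Ẽ 1 = 1` and `Ẽ p² ≥ 0` for all `p` of degree at most 2. -/
def IsPE4 {n : ℕ} (E : MvPolynomial (Fin n) ℝ →ₗ[ℝ] ℝ) : Prop :=
  E 1 = 1 ∧ ∀ p : MvPolynomial (Fin n) ℝ, p.totalDegree ≤ 2 → 0 ≤ E (p ^ 2)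

/-! ### Auxiliary material -/

namespace PEAux

variable {n : ℕ}

/-- The quadratic polynomial `x ↦ xᵀ A x` written out as `∑ j k, A j k • x_j x_k`. -/
def qpoly (A : Fin n → Matrix (Fin n) (Fin n) ℝ) (i : Fin n) : MvPolynomial (Fin n) ℝ :=
  ∑ j, ∑ k, C (A i j k) * (X j * X k)

/-- The degree-4 polynomial `(x⊗x)ᵀ N (x⊗x)`, as a linear map in `N`. -/
def polyQF (n : ℕ) :
    Matrix (Fin n × Fin n) (Fin n × Fin n) ℝ →ₗ[ℝ] MvPolynomial (Fin n) ℝ where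
  toFun N := ∑ p, ∑ q, C (N p q) * ((X p.1 * X p.2) * (X q.1 * X q.2))
  map_add' N₁ N₂ := by
    simp only [Matrix.add_apply, map_add, add_mul, Finset.sum_add_distrib]
  map_smul' a N := by
    simp only [Matrix.smul_apply, smul_eq_mul, _root_.map_mul, RingHom.id_apply, smul_eq_C_mul,
      Finset.mul_sum, mul_assoc]

lemma polyQF_apply (N : Matrix (Fin n × Fin n) (Fin n × Fin n) ℝ) :
    polyQF n N = ∑ p, ∑ q, C (N p q) * ((X p.1 * X p.2) * (X q.1 * X q.2)) := rfl

lemma eval_polyQF (N : Matrix (Fin n × Fin n) (Fin n × Fin n) ℝ) (x : Fin n → ℝ) :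
    eval x (polyQF n N) =
      (fun p : Fin n × Fin n => x p.1 * x p.2) ⬝ᵥ
        N.mulVec (fun p : Fin n × Fin n => x p.1 * x p.2) := by
  simp only [polyQF_apply, map_sum, eval_mul, eval_C, eval_X, dotProduct, mulVec]
  refine Finset.sum_congr rfl fun p _ => ?_
  rw [Finset.mul_sum]
  exact Finset.sum_congr rfl fun q _ => by ring

lemma polyQF_transpose (N : Matrix (Fin n × Fin n) (Fin n × Fin n) ℝ) :
    polyQF n Nᵀ = polyQF n N := by
  rw [polyQF_apply, polyQF_apply, Finset.sum_comm]
  exact Finset.sum_congr rfl fun p _ => Finset.sum_congr rfl fun q _ => by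
    rw [Matrix.transpose_apply]; ring

lemma sum_rot {α β γ M : Type*} [Fintype α] [Fintype β] [Fintype γ] [AddCommMonoid M]
    (F : α → β → γ → M) :
    ∑ a, ∑ b, ∑ c, F a b c = ∑ c, ∑ a, ∑ b, F a b c :=
  calc ∑ a, ∑ b, ∑ c, F a b c
      = ∑ a, ∑ c, ∑ b, F a b c :=
        Finset.sum_congr rfl fun a _ => Finset.sum_comm
    _ = ∑ c, ∑ a, ∑ b, F a b c := Finset.sum_comm

lemma polyQF_kronecker (A : Fin n → Matrix (Fin n) (Fin n) ℝ) (i : Fin n) :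
    polyQF n (A i ⊗ₖ A i) = qpoly A i ^ 2 := by
  have hRHS : qpoly A i ^ 2
      = ∑ j, ∑ j', ∑ k, ∑ k',
          (C (A i j k) * (X j * X k)) * (C (A i j' k') * (X j' * X k')) := by
    rw [qpoly, sq, Finset.sum_mul_sum]
    exact Finset.sum_congr rfl fun j _ => Finset.sum_congr rfl fun j' _ =>
      Finset.sum_mul_sum _ _ _ _
  rw [hRHS, polyQF_apply, Fintype.sum_prod_type]
  refine Finset.sum_congr rfl fun p1 _ => Finset.sum_congr rfl fun p2 _ => ?_
  rw [Fintype.sum_prod_type]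
  refine Finset.sum_congr rfl fun q1 _ => Finset.sum_congr rfl fun q2 _ => ?_
  simp only [Matrix.kroneckerMap_apply, _root_.map_mul]
  ring

lemma polyQF_conjTranspose_mul_self (B : Matrix (Fin n × Fin n) (Fin n × Fin n) ℝ) :
    polyQF n (Bᴴ * B) = ∑ r, (∑ p : Fin n × Fin n, C (B r p) * (X p.1 * X p.2)) ^ 2 := by
  have hL : polyQF n (Bᴴ * B)
      = ∑ p, ∑ q, ∑ r,
          (C (B r p) * (X p.1 * X p.2)) * (C (B r q) * (X q.1 * X q.2)) := by
    rw [polyQF_apply]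
    refine Finset.sum_congr rfl fun p _ => Finset.sum_congr rfl fun q _ => ?_
    simp only [Matrix.mul_apply, Matrix.conjTranspose_apply, star_trivial, map_sum,
      Finset.sum_mul]
    exact Finset.sum_congr rfl fun r _ => by rw [_root_.map_mul]; ring
  rw [hL, sum_rot]
  refine Finset.sum_congr rfl fun r _ => ?_
  rw [sq, Finset.sum_mul_sum]

lemma totalDegree_C_mul_XX (a : ℝ) (j k : Fin n) :
    (C a * (X j * X k) : MvPolynomial (Fin n) ℝ).totalDegree ≤ 2 :=
  calc (C a * (X j * X k) : MvPolynomial (Fin n) ℝ).totalDegree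
      ≤ (C a : MvPolynomial (Fin n) ℝ).totalDegree
          + (X j * X k : MvPolynomial (Fin n) ℝ).totalDegree :=
        totalDegree_mul _ _
    _ ≤ 0 + ((X j : MvPolynomial (Fin n) ℝ).totalDegree
          + (X k : MvPolynomial (Fin n) ℝ).totalDegree) :=
        add_le_add (le_of_eq (totalDegree_C a)) (totalDegree_mul _ _)
    _ = 2 := by rw [totalDegree_X, totalDegree_X]

lemma totalDegree_qpoly (A : Fin n → Matrix (Fin n) (Fin n) ℝ) (i : Fin n) :
    (qpoly A i).totalDegree ≤ 2 :=
  (totalDegree_finset_sum _ _).trans <| Finset.sup_le fun j _ =>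
    (totalDegree_finset_sum _ _).trans <| Finset.sup_le fun k _ =>
      totalDegree_C_mul_XX _ _ _

lemma totalDegree_sumSq : (sumSq n).totalDegree ≤ 2 :=
  (totalDegree_finset_sum _ _).trans <| Finset.sup_le fun i _ =>
    le_trans (totalDegree_pow _ _) (by simp [totalDegree_X])

/-- Cauchy–Schwarz for degree-4 pseudo-expectations. -/
lemma pe_cs (E : MvPolynomial (Fin n) ℝ →ₗ[ℝ] ℝ) (hE : IsPE4 E)
    {ι : Type*} [Fintype ι] (p q : ι → MvPolynomial (Fin n) ℝ)
    (hp : ∀ i, (p i).totalDegree ≤ 2) (hq : ∀ i, (q i).totalDegree ≤ 2) :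
    (E (∑ i, p i * q i)) ^ 2 ≤ E (∑ i, p i ^ 2) * E (∑ i, q i ^ 2) := by
  have key : ∀ t : ℝ,
      0 ≤ E (∑ i, p i ^ 2) * (t * t) + (2 * E (∑ i, p i * q i)) * t + E (∑ i, q i ^ 2) := by
    intro t
    have expand : ∑ i, (C t * p i + q i) ^ 2
        = (t * t) • (∑ i, p i ^ 2) + ((2 * t) • (∑ i, p i * q i) + ∑ i, q i ^ 2) := by
      rw [smul_eq_C_mul, smul_eq_C_mul, Finset.mul_sum, Finset.mul_sum,
        ← Finset.sum_add_distrib, ← Finset.sum_add_distrib]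
      refine Finset.sum_congr rfl fun i _ => ?_
      simp only [_root_.map_mul, map_ofNat]
      ring
    have h0 : 0 ≤ E (∑ i, (C t * p i + q i) ^ 2) := by
      rw [map_sum]
      refine Finset.sum_nonneg fun i _ => hE.2 _ ?_
      refine le_trans (totalDegree_add _ _) (max_le ?_ (hq i))
      refine le_trans (totalDegree_mul _ _) ?_
      rw [totalDegree_C, zero_add]
      exact hp i
    simp only [expand, map_add, LinearMap.map_smul, smul_eq_mul] at h0
    linarith
  have hd := discrim_le_zero key
  rw [discrim] at hd
  nlinarith [hd]

lemma pe_cs_one (E : MvPolynomial (Fin n) ℝ →ₗ[ℝ] ℝ) (hE : IsPE4 E)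
    (p q : MvPolynomial (Fin n) ℝ)
    (hp : p.totalDegree ≤ 2) (hq : q.totalDegree ≤ 2) :
    (E (p * q)) ^ 2 ≤ E (p ^ 2) * E (q ^ 2) := by
  simpa using pe_cs E hE (ι := Fin 1) (fun _ => p) (fun _ => q)
    (fun _ => hp) (fun _ => hq)

end PEAux

open PEAux

/-- if a homogeneous degree-3 polynomial `f` is `λ`-bounded, then every
degree-4 pseudo-expectation satisfies `Ẽ f ≤ λ (Ẽ ‖x‖⁴)^(3/4)`; in particular
`f(v) ≤ λ` for every unit vector `v`. -/
theorem lambda_bounded_implies_pe_bound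
    {n : ℕ} (lam : ℝ) (hlam : 0 ≤ lam)
    (f : MvPolynomial (Fin n) ℝ) (hf : f.IsHomogeneous 3)
    (A : Fin n → Matrix (Fin n) (Fin n) ℝ)
    (hfA : f = ∑ i, X i * ∑ j, ∑ k, MvPolynomial.C (A i j k) * (X j * X k))
    (M : Matrix (Fin n × Fin n) (Fin n × Fin n) ℝ)
    (hM : ∀ x : Fin n → ℝ,
      (fun p : Fin n × Fin n => x p.1 * x p.2) ⬝ᵥ
        M.mulVec (fun p : Fin n × Fin n => x p.1 * x p.2) = (∑ i, x i ^ 2) ^ 2)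
    (hLoewner : ∀ v : Fin n × Fin n → ℝ,
      0 ≤ v ⬝ᵥ ((lam ^ 2 • M - ∑ i, (A i ⊗ₖ A i)).mulVec v)) :
    (∀ E : MvPolynomial (Fin n) ℝ →ₗ[ℝ] ℝ, IsPE4 E →
      E f ≤ lam * (E (sumSq n ^ 2)) ^ ((3 : ℝ) / 4)) ∧
    (∀ v : Fin n → ℝ, ∑ i, v i ^ 2 = 1 → eval v f ≤ lam) := by
  have hfA' : f = ∑ i, X i * qpoly A i := hfA
  set P : Matrix (Fin n × Fin n) (Fin n × Fin n) ℝ := lam ^ 2 • M - ∑ i, A i ⊗ₖ A i with hP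
  -- the symmetrized matrix is PSD
  have hPsd : ((1/2 : ℝ) • (P + Pᵀ)).PosSemidef := by
    refine Matrix.posSemidef_iff_dotProduct_mulVec.mpr ⟨?_, ?_⟩
    · show _ᴴ = _
      ext p q
      simp only [Matrix.conjTranspose_apply, Matrix.smul_apply, Matrix.add_apply,
        Matrix.transpose_apply, star_trivial, smul_eq_mul]
      ring
    · intro x
      have h1 : x ⬝ᵥ Pᵀ *ᵥ x = x ⬝ᵥ P *ᵥ x := by
        rw [Matrix.dotProduct_mulVec, Matrix.vecMul_transpose, dotProduct_comm]
      have h2 := hLoewner x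
      simp only [star_trivial]
      rw [smul_mulVec, dotProduct_smul, add_mulVec, dotProduct_add, h1, smul_eq_mul]
      linarith
  open scoped MatrixOrder in
  obtain ⟨B, hB⟩ : ∃ B, (1/2 : ℝ) • (P + Pᵀ) = Bᴴ * B :=
    CStarAlgebra.nonneg_iff_eq_star_mul_self.mp hPsd.nonneg
  -- key polynomial identities
  have hMpoly : polyQF n M = sumSq n ^ 2 := by
    apply MvPolynomial.funext
    intro x
    rw [eval_polyQF, hM]
    simp [sumSq]
  have hPQF : polyQF n P = C (lam ^ 2) * sumSq n ^ 2 - ∑ i, qpoly A i ^ 2 := by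
    rw [hP, map_sub, LinearMap.map_smul, smul_eq_C_mul, hMpoly, map_sum]
    rw [Finset.sum_congr rfl fun i _ => polyQF_kronecker A i]
  have hSym : polyQF n ((1/2 : ℝ) • (P + Pᵀ)) = polyQF n P := by
    rw [LinearMap.map_smul, map_add, polyQF_transpose, smul_eq_C_mul, ← two_smul ℝ (polyQF n P),
      smul_eq_C_mul, ← mul_assoc, ← _root_.map_mul,
      show (1/2 : ℝ) * 2 = 1 by norm_num, C_1, one_mul]
  -- the main bound
  have main : ∀ E : MvPolynomial (Fin n) ℝ →ₗ[ℝ] ℝ, IsPE4 E →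
      E f ≤ lam * (E (sumSq n ^ 2)) ^ ((3 : ℝ) / 4) := by
    intro E hE
    set S : ℝ := E (sumSq n ^ 2) with hSdef
    have hS : 0 ≤ S := hE.2 _ totalDegree_sumSq
    -- SOS positivity : E (polyQF P) ≥ 0
    have hEP : 0 ≤ E (polyQF n P) := by
      rw [← hSym, hB, polyQF_conjTranspose_mul_self, map_sum]
      refine Finset.sum_nonneg fun r _ => hE.2 _ ?_
      exact (totalDegree_finset_sum _ _).trans <| Finset.sup_le fun p _ =>
        totalDegree_C_mul_XX _ _ _
    have hQbound : E (∑ i, qpoly A i ^ 2) ≤ lam ^ 2 * S := by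
      rw [hPQF, map_sub, ← smul_eq_C_mul, LinearMap.map_smul, smul_eq_mul] at hEP
      linarith
    have hQ0 : 0 ≤ E (∑ i, qpoly A i ^ 2) := by
      rw [map_sum]
      exact Finset.sum_nonneg fun i _ => hE.2 _ (totalDegree_qpoly A i)
    have hEs0 : 0 ≤ E (sumSq n) := by
      rw [sumSq, map_sum]
      refine Finset.sum_nonneg fun i _ => hE.2 _ ?_
      simpa [totalDegree_X] using le_trans (totalDegree_pow (X i : MvPolynomial (Fin n) ℝ) 2)
        (by simp [totalDegree_X])
    -- Cauchy-Schwarz #2 : (E sumSq)² ≤ S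
    have hcs2 : (E (sumSq n)) ^ 2 ≤ S := by
      have := pe_cs_one E hE 1 (sumSq n) (by simp) totalDegree_sumSq
      simpa [hE.1] using this
    have hEs : E (sumSq n) ≤ Real.sqrt S := by
      rw [show E (sumSq n) = Real.sqrt ((E (sumSq n)) ^ 2) from (Real.sqrt_sq hEs0).symm]
      exact Real.sqrt_le_sqrt hcs2
    -- Cauchy-Schwarz #1
    have hcs1 : (E f) ^ 2 ≤ E (sumSq n) * E (∑ i, qpoly A i ^ 2) := by
      have := pe_cs E hE (fun i => X i) (fun i => qpoly A i)
        (fun i => by simp [totalDegree_X]) (totalDegree_qpoly A)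
      rw [← hfA'] at this
      simpa [sumSq] using this
    have hmain2 : (E f) ^ 2 ≤ lam ^ 2 * (Real.sqrt S * S) := by
      calc (E f) ^ 2 ≤ E (sumSq n) * E (∑ i, qpoly A i ^ 2) := hcs1
        _ ≤ Real.sqrt S * (lam ^ 2 * S) :=
            mul_le_mul hEs hQbound hQ0 (Real.sqrt_nonneg _)
        _ = lam ^ 2 * (Real.sqrt S * S) := by ring
    -- convert to the rpow bound
    set T : ℝ := lam * S ^ ((3 : ℝ) / 4) with hTdef
    have hT0 : 0 ≤ T := mul_nonneg hlam (Real.rpow_nonneg hS _)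
    have hT2 : T ^ 2 = lam ^ 2 * (Real.sqrt S * S) := by
      have h1 : (S ^ ((3 : ℝ) / 4)) ^ 2 = S ^ ((3 : ℝ) / 2) := by
        rw [← Real.rpow_natCast (S ^ ((3 : ℝ) / 4)) 2, ← Real.rpow_mul hS]
        norm_num
      have h2 : S ^ ((3 : ℝ) / 2) = Real.sqrt S * S := by
        rw [show (3 : ℝ) / 2 = 1 / 2 + 1 by norm_num,
          Real.rpow_add' hS (by norm_num), Real.rpow_one, ← Real.sqrt_eq_rpow]
      rw [hTdef, mul_pow, h1, h2]
    have hsq : (E f) ^ 2 ≤ T ^ 2 := by rw [hT2]; exact hmain2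
    nlinarith [hsq, hT0]
  refine ⟨main, fun v hv => ?_⟩
  -- evaluation at a unit vector is a pseudo-expectation
  let Ev : MvPolynomial (Fin n) ℝ →ₗ[ℝ] ℝ :=
    { toFun := eval v
      map_add' := fun a b => map_add _ a b
      map_smul' := fun c a => by
        simp only [RingHom.id_apply, smul_eq_mul, smul_eq_C_mul, _root_.map_mul, eval_C] }
  have hEv : IsPE4 Ev := by
    constructor
    · show eval v 1 = 1
      simp
    · intro p _
      show 0 ≤ eval v (p ^ 2)
      rw [map_pow]
      exact sq_nonneg _
  have hb := main Ev hEv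
  have h1 : Ev (sumSq n ^ 2) = 1 := by
    show eval v (sumSq n ^ 2) = 1
    rw [map_pow]
    simp [sumSq, hv]
  rw [h1, Real.one_rpow, mul_one] at hb
  exact hb
end
end

section
/- There are absolute constants C > 0 and c > 0 such that the following holds. Let n ∈ ℕ, τ > 0, 0 ≤ ε ≤ c, let v₀ ∈ ℝⁿ be a unit vector, and let A be an n×n×n real array with slices A_i. Let W be the n²×n² matrix with entries W[(j₁,j₂),(j₃,j₄)] = δ_{j₁j₂}·δ_{j₃j₄} (so that n·W = E[∑_i A_i ⊗ A_i] when A has i.i.d. standard Gaussian entries). Suppose ‖∑_i A_i ⊗ A_i − n·W‖ ≤ ε·τ² and ‖∑_i v₀(i)·A_i‖ ≤ ε·τ. Let T = τ·v₀^{⊗3} + A with slices T_i, and let M = ∑_i T_i ⊗ T_i − n·W. Then any top left singular vector and any top right singular vector v′ ∈ ℝ^{n²} of M (with ‖v′‖ = 1) satisfies ⟨v′, v₀⊗v₀⟩² ≥ 1 − C·ε. -/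
open Matrix
open scoped Kronecker Matrix.Norms.L2Operator

noncomputable section

/-- Euclidean norm of a vector. -/
def enorm2 {ι : Type*} [Fintype ι] (v : ι → ℝ) : ℝ := Real.sqrt (∑ i, v i ^ 2)

/-- Spectral (operator) norm of a real matrix, w.r.t. Euclidean norms. -/
def opNorm {ι κ : Type*} [Fintype ι] [Fintype κ] [DecidableEq κ]
    (M : Matrix ι κ ℝ) : ℝ :=
  ‖LinearMap.toContinuousLinearMap (Matrix.toEuclideanLin M)‖

/-- The matrix `W[(j₁,j₂),(j₃,j₄)] = δ_{j₁j₂} δ_{j₃j₄}`. -/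
def Wmat (n : ℕ) : Matrix (Fin n × Fin n) (Fin n × Fin n) ℝ :=
  Matrix.of fun p q =>
    (if p.1 = p.2 then (1 : ℝ) else 0) * (if q.1 = q.2 then (1 : ℝ) else 0)

section AuxLemmas

set_option linter.unusedSectionVars false

variable {ι κ : Type*} [Fintype ι] [Fintype κ] [DecidableEq κ]

lemma opNorm_eq (M : Matrix ι κ ℝ) : opNorm M = ‖M‖ := rfl

lemma enorm2_eq (v : ι → ℝ) : enorm2 v = ‖(WithLp.equiv 2 (ι → ℝ)).symm v‖ := by
  rw [EuclideanSpace.norm_eq]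
  simp [enorm2, Real.norm_eq_abs, sq_abs]

lemma enorm2_mulVec_le (M : Matrix ι κ ℝ) (x : κ → ℝ) :
    enorm2 (M.mulVec x) ≤ opNorm M * enorm2 x := by
  rw [enorm2_eq, enorm2_eq, opNorm_eq]
  exact M.l2_opNorm_mulVec ((WithLp.equiv 2 (κ → ℝ)).symm x)

lemma enorm2_nonneg (v : ι → ℝ) : 0 ≤ enorm2 v := Real.sqrt_nonneg _

lemma opNorm_nonneg (M : Matrix ι κ ℝ) : 0 ≤ opNorm M := norm_nonneg _

lemma opNorm_le_of (M : Matrix ι κ ℝ) {K : ℝ} (hK : 0 ≤ K)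
    (h : ∀ x : κ → ℝ, enorm2 (M.mulVec x) ≤ K * enorm2 x) : opNorm M ≤ K := by
  refine ContinuousLinearMap.opNorm_le_bound _ hK fun x => ?_
  have := h (WithLp.equiv 2 (κ → ℝ) x)
  rw [enorm2_eq, enorm2_eq] at this
  simpa [Matrix.toEuclideanLin_apply] using this

lemma opNorm_transpose [DecidableEq ι] (M : Matrix ι κ ℝ) : opNorm Mᵀ = opNorm M := by
  rw [opNorm_eq, opNorm_eq, ← Matrix.l2_opNorm_conjTranspose M]
  congr 1

lemma enorm2_smul (c : ℝ) (v : ι → ℝ) : enorm2 (c • v) = |c| * enorm2 v := by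
  rw [enorm2_eq, enorm2_eq, ← Real.norm_eq_abs, ← norm_smul]
  rfl

lemma enorm2_add_le (v w : ι → ℝ) : enorm2 (v + w) ≤ enorm2 v + enorm2 w := by
  rw [enorm2_eq, enorm2_eq, enorm2_eq]
  exact norm_add_le _ _

lemma enorm2_neg (v : ι → ℝ) : enorm2 (-v) = enorm2 v := by
  have := enorm2_smul (-1 : ℝ) v
  simpa using this

lemma enorm2_le_of_sq_le {v : ι → ℝ} {w : κ → ℝ}
    (h : ∑ i, v i ^ 2 ≤ ∑ j, w j ^ 2) : enorm2 v ≤ enorm2 w :=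
  Real.sqrt_le_sqrt h

lemma opNorm_add_le (M N : Matrix ι κ ℝ) : opNorm (M + N) ≤ opNorm M + opNorm N := by
  rw [opNorm_eq, opNorm_eq, opNorm_eq]; exact norm_add_le _ _

lemma opNorm_smul (c : ℝ) (M : Matrix ι κ ℝ) : opNorm (c • M) = |c| * opNorm M := by
  rw [opNorm_eq, opNorm_eq, norm_smul, Real.norm_eq_abs]

lemma kron_left_bound {n : ℕ} (v₀ : Fin n → ℝ) (hv : ∑ i, v₀ i ^ 2 = 1)
    (S : Matrix (Fin n) (Fin n) ℝ) :
    opNorm ((Matrix.of fun j k : Fin n => v₀ j * v₀ k) ⊗ₖ S) ≤ opNorm S := by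
  apply opNorm_le_of _ (opNorm_nonneg S)
  intro x
  set w : Fin n → ℝ := fun k₂ => ∑ k₁, v₀ k₁ * x (k₁, k₂) with hw
  have hmv : (((Matrix.of fun j k : Fin n => v₀ j * v₀ k) ⊗ₖ S).mulVec x)
      = fun p => v₀ p.1 * (S.mulVec w) p.2 := by
    funext p
    simp only [Matrix.mulVec, dotProduct, Fintype.sum_prod_type,
      Matrix.kroneckerMap_apply, Matrix.of_apply, hw, Finset.mul_sum]
    rw [Finset.sum_comm]
    exact Finset.sum_congr rfl fun k₂ _ => Finset.sum_congr rfl fun k₁ _ => by ring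
  have he : enorm2 (((Matrix.of fun j k : Fin n => v₀ j * v₀ k) ⊗ₖ S).mulVec x)
      = enorm2 (S.mulVec w) := by
    rw [hmv]; unfold enorm2; congr 1
    rw [Fintype.sum_prod_type]
    simp only [mul_pow]
    rw [← Finset.sum_mul_sum, hv, one_mul]
  rw [he]
  have h1 : enorm2 (S.mulVec w) ≤ opNorm S * enorm2 w := enorm2_mulVec_le S w
  have h2 : enorm2 w ≤ enorm2 x := by
    apply enorm2_le_of_sq_le
    rw [Fintype.sum_prod_type]
    rw [Finset.sum_comm]
    apply Finset.sum_le_sum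
    intro k₂ _
    calc (∑ k₁, v₀ k₁ * x (k₁, k₂)) ^ 2
        ≤ (∑ k₁, v₀ k₁ ^ 2) * ∑ k₁, x (k₁, k₂) ^ 2 :=
          Finset.sum_mul_sq_le_sq_mul_sq _ _ _
      _ = ∑ k₁, x (k₁, k₂) ^ 2 := by rw [hv, one_mul]
  calc enorm2 (S.mulVec w) ≤ opNorm S * enorm2 w := h1
    _ ≤ opNorm S * enorm2 x := by
        exact mul_le_mul_of_nonneg_left h2 (opNorm_nonneg S)

lemma kron_right_bound {n : ℕ} (v₀ : Fin n → ℝ) (hv : ∑ i, v₀ i ^ 2 = 1)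
    (S : Matrix (Fin n) (Fin n) ℝ) :
    opNorm (S ⊗ₖ (Matrix.of fun j k : Fin n => v₀ j * v₀ k)) ≤ opNorm S := by
  apply opNorm_le_of _ (opNorm_nonneg S)
  intro x
  set w : Fin n → ℝ := fun k₁ => ∑ k₂, v₀ k₂ * x (k₁, k₂) with hw
  have hmv : ((S ⊗ₖ (Matrix.of fun j k : Fin n => v₀ j * v₀ k)).mulVec x)
      = fun p => (S.mulVec w) p.1 * v₀ p.2 := by
    funext p
    simp only [Matrix.mulVec, dotProduct, Fintype.sum_prod_type,
      Matrix.kroneckerMap_apply, Matrix.of_apply, hw, Finset.mul_sum, Finset.sum_mul]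
    exact Finset.sum_congr rfl fun k₁ _ => Finset.sum_congr rfl fun k₂ _ => by ring
  have he : enorm2 ((S ⊗ₖ (Matrix.of fun j k : Fin n => v₀ j * v₀ k)).mulVec x)
      = enorm2 (S.mulVec w) := by
    rw [hmv]; unfold enorm2; congr 1
    rw [Fintype.sum_prod_type]
    simp only [mul_pow]
    rw [← Finset.sum_mul_sum]
    rw [hv, mul_one]
  rw [he]
  have h2 : enorm2 w ≤ enorm2 x := by
    apply enorm2_le_of_sq_le
    rw [Fintype.sum_prod_type]
    apply Finset.sum_le_sum
    intro k₁ _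
    calc (∑ k₂, v₀ k₂ * x (k₁, k₂)) ^ 2
        ≤ (∑ k₂, v₀ k₂ ^ 2) * ∑ k₂, x (k₁, k₂) ^ 2 :=
          Finset.sum_mul_sq_le_sq_mul_sq _ _ _
      _ = ∑ k₂, x (k₁, k₂) ^ 2 := by rw [hv, one_mul]
  calc enorm2 (S.mulVec w) ≤ opNorm S * enorm2 w := enorm2_mulVec_le S w
    _ ≤ opNorm S * enorm2 x := mul_le_mul_of_nonneg_left h2 (opNorm_nonneg S)

lemma rank_one_mulVec [DecidableEq ι] (u : ι → ℝ) (x : ι → ℝ) :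
    (Matrix.of fun p q => u p * u q).mulVec x = (∑ q, u q * x q) • u := by
  funext p
  simp only [Matrix.mulVec, dotProduct, Matrix.of_apply, Pi.smul_apply, smul_eq_mul,
    Finset.sum_mul]
  exact Finset.sum_congr rfl fun q _ => by ring

lemma key_lemma [DecidableEq ι] (u : ι → ℝ) (hu : ∑ q, u q ^ 2 = 1)
    (τ ε : ℝ) (hτ : 0 < τ) (hε : 0 ≤ ε)
    (N E : Matrix ι ι ℝ) (hN : N = τ ^ 2 • (Matrix.of fun p q => u p * u q) + E)
    (hE : opNorm E ≤ 3 * (ε * τ ^ 2)) (v' : ι → ℝ) (hv' : enorm2 v' = 1)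
    (htop : ∀ w, enorm2 w = 1 → enorm2 (N.mulVec w) ≤ enorm2 (N.mulVec v')) :
    1 - 12 * ε ≤ (∑ p, v' p * u p) ^ 2 := by
  have huu : enorm2 u = 1 := by unfold enorm2; rw [hu]; exact Real.sqrt_one
  have hτ2 : (0:ℝ) < τ ^ 2 := by positivity
  have hNx : ∀ x, N.mulVec x = (τ ^ 2 * ∑ q, u q * x q) • u + E.mulVec x := by
    intro x
    rw [hN, Matrix.add_mulVec, Matrix.smul_mulVec, rank_one_mulVec, smul_smul]
  set d : ℝ := ∑ q, u q * v' q with hd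
  -- lower bound
  have huul : (∑ q, u q * u q) = 1 := by rw [← hu]; exact Finset.sum_congr rfl fun q _ => (sq (u q)).symm
  have hEu : enorm2 (E.mulVec u) ≤ 3 * (ε * τ ^ 2) := by
    calc enorm2 (E.mulVec u) ≤ opNorm E * enorm2 u := enorm2_mulVec_le E u
      _ = opNorm E := by rw [huu, mul_one]
      _ ≤ 3 * (ε * τ ^ 2) := hE
  have hlow : τ ^ 2 - 3 * (ε * τ ^ 2) ≤ enorm2 (N.mulVec u) := by
    have h1 : N.mulVec u = (τ ^ 2 * 1) • u + E.mulVec u := by rw [hNx, huul]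
    have h2 : enorm2 ((τ ^ 2 * 1) • u) ≤ enorm2 (N.mulVec u) + enorm2 (E.mulVec u) := by
      have : (τ ^ 2 * 1) • u = N.mulVec u + -(E.mulVec u) := by rw [h1]; abel
      rw [this]
      calc enorm2 (N.mulVec u + -(E.mulVec u))
          ≤ enorm2 (N.mulVec u) + enorm2 (-(E.mulVec u)) := enorm2_add_le _ _
        _ = enorm2 (N.mulVec u) + enorm2 (E.mulVec u) := by rw [enorm2_neg]
    have h3 : enorm2 ((τ ^ 2 * 1) • u) = τ ^ 2 := by
      rw [enorm2_smul, huu, mul_one, mul_one, abs_of_pos hτ2]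
    linarith
  -- upper bound
  have hEv : enorm2 (E.mulVec v') ≤ 3 * (ε * τ ^ 2) := by
    calc enorm2 (E.mulVec v') ≤ opNorm E * enorm2 v' := enorm2_mulVec_le E v'
      _ = opNorm E := by rw [hv', mul_one]
      _ ≤ 3 * (ε * τ ^ 2) := hE
  have hup : enorm2 (N.mulVec v') ≤ τ ^ 2 * |d| + 3 * (ε * τ ^ 2) := by
    rw [hNx]
    calc enorm2 ((τ ^ 2 * d) • u + E.mulVec v')
        ≤ enorm2 ((τ ^ 2 * d) • u) + enorm2 (E.mulVec v') := enorm2_add_le _ _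
      _ ≤ τ ^ 2 * |d| + 3 * (ε * τ ^ 2) := by
          rw [enorm2_smul, huu, mul_one, abs_mul, abs_of_pos hτ2]
          linarith
  have hchain : τ ^ 2 - 3 * (ε * τ ^ 2) ≤ τ ^ 2 * |d| + 3 * (ε * τ ^ 2) :=
    le_trans hlow (le_trans (htop u huu) hup)
  have habs : 1 - 6 * ε ≤ |d| := by nlinarith
  have hgoal : (∑ p, v' p * u p) = d := Finset.sum_congr rfl fun p _ => mul_comm _ _
  rw [hgoal]
  rcases le_or_gt 0 (1 - 6 * ε) with h | h
  · nlinarith [mul_self_le_mul_self h habs, sq_abs d, sq_nonneg ε]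
  · nlinarith [sq_nonneg d]

end AuxLemmas

/-- under the stated spectral bounds on the noise, every top left or top
right singular vector `v′` of `M = ∑ᵢ Tᵢ ⊗ Tᵢ - n W` satisfies
`⟨v′, v₀ ⊗ v₀⟩² ≥ 1 - Cε`. -/
theorem top_singular_vector_correlates :
    ∃ C c : ℝ, 0 < C ∧ 0 < c ∧
      ∀ (n : ℕ) (τ ε : ℝ) (v₀ : Fin n → ℝ) (A : Fin n → Fin n → Fin n → ℝ),
        0 < τ → 0 ≤ ε → ε ≤ c → (∑ i, v₀ i ^ 2) = 1 →
        opNorm ((∑ i, (Matrix.of (A i) ⊗ₖ Matrix.of (A i))) - (n : ℝ) • Wmat n)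
          ≤ ε * τ ^ 2 →
        opNorm (∑ i, v₀ i • Matrix.of (A i)) ≤ ε * τ →
        ∀ M : Matrix (Fin n × Fin n) (Fin n × Fin n) ℝ,
          M = (∑ i, ((Matrix.of fun j k => τ * v₀ i * v₀ j * v₀ k + A i j k) ⊗ₖ
                     (Matrix.of fun j k => τ * v₀ i * v₀ j * v₀ k + A i j k)))
              - (n : ℝ) • Wmat n →
          ∀ v' : Fin n × Fin n → ℝ, enorm2 v' = 1 →
            ((∀ w : Fin n × Fin n → ℝ, enorm2 w = 1 →
                enorm2 (Mᵀ.mulVec w) ≤ enorm2 (Mᵀ.mulVec v')) ∨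
             (∀ w : Fin n × Fin n → ℝ, enorm2 w = 1 →
                enorm2 (M.mulVec w) ≤ enorm2 (M.mulVec v'))) →
            1 - C * ε ≤ (∑ p : Fin n × Fin n, v' p * (v₀ p.1 * v₀ p.2)) ^ 2 := by
  refine ⟨12, 1, by norm_num, by norm_num, ?_⟩
  intro n τ ε v₀ A hτ hε hεc hv hA2 hA1 M hM v' hv' htop
  set B : Matrix (Fin n) (Fin n) ℝ := Matrix.of fun j k => v₀ j * v₀ k with hB
  set S : Matrix (Fin n) (Fin n) ℝ := ∑ i, v₀ i • Matrix.of (A i) with hS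
  set E₀ : Matrix (Fin n × Fin n) (Fin n × Fin n) ℝ :=
    (∑ i, (Matrix.of (A i) ⊗ₖ Matrix.of (A i))) - (n : ℝ) • Wmat n with hE₀
  set u : Fin n × Fin n → ℝ := fun p => v₀ p.1 * v₀ p.2 with hu
  set R : Matrix (Fin n × Fin n) (Fin n × Fin n) ℝ :=
    τ • (B ⊗ₖ S) + τ • (S ⊗ₖ B) + E₀ with hR
  have hu1 : ∑ q : Fin n × Fin n, u q ^ 2 = 1 := by
    rw [Fintype.sum_prod_type]
    simp only [hu, mul_pow]
    rw [← Finset.sum_mul_sum, hv, one_mul]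
  have hsum : (∑ i, ((Matrix.of fun j k => τ * v₀ i * v₀ j * v₀ k + A i j k) ⊗ₖ
                     (Matrix.of fun j k => τ * v₀ i * v₀ j * v₀ k + A i j k)))
      = τ ^ 2 • (Matrix.of fun p q : Fin n × Fin n => u p * u q)
        + τ • (B ⊗ₖ S) + τ • (S ⊗ₖ B)
        + ∑ i, (Matrix.of (A i) ⊗ₖ Matrix.of (A i)) := by
    ext p q
    simp only [Matrix.sum_apply, Matrix.kroneckerMap_apply, Matrix.of_apply,
      Matrix.add_apply, Matrix.smul_apply, smul_eq_mul, hu, hB, hS]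
    have expand : ∀ i : Fin n,
        (τ * v₀ i * v₀ p.1 * v₀ q.1 + A i p.1 q.1) *
          (τ * v₀ i * v₀ p.2 * v₀ q.2 + A i p.2 q.2)
        = τ ^ 2 * (v₀ p.1 * v₀ p.2 * (v₀ q.1 * v₀ q.2)) * v₀ i ^ 2
          + τ * ((v₀ p.1 * v₀ q.1) * (v₀ i * A i p.2 q.2))
          + τ * ((v₀ i * A i p.1 q.1) * (v₀ p.2 * v₀ q.2))
          + A i p.1 q.1 * A i p.2 q.2 := fun i => by ring
    rw [Finset.sum_congr rfl fun i _ => expand i]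
    simp only [Finset.sum_add_distrib, ← Finset.mul_sum, ← Finset.sum_mul, hv]
    ring
  have hdecomp : M = τ ^ 2 • (Matrix.of fun p q : Fin n × Fin n => u p * u q) + R := by
    rw [hM, hsum, hR, hE₀]
    abel
  have hτ' : 0 ≤ τ := le_of_lt hτ
  have hRnorm : opNorm R ≤ 3 * (ε * τ ^ 2) := by
    have h1 : opNorm (B ⊗ₖ S) ≤ opNorm S := kron_left_bound v₀ hv S
    have h2 : opNorm (S ⊗ₖ B) ≤ opNorm S := kron_right_bound v₀ hv S
    have h3 : opNorm R ≤ |τ| * opNorm (B ⊗ₖ S) + |τ| * opNorm (S ⊗ₖ B) + opNorm E₀ := by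
      calc opNorm R ≤ opNorm (τ • (B ⊗ₖ S) + τ • (S ⊗ₖ B)) + opNorm E₀ :=
            opNorm_add_le _ _
        _ ≤ opNorm (τ • (B ⊗ₖ S)) + opNorm (τ • (S ⊗ₖ B)) + opNorm E₀ := by
            have := opNorm_add_le (τ • (B ⊗ₖ S)) (τ • (S ⊗ₖ B)); linarith
        _ = |τ| * opNorm (B ⊗ₖ S) + |τ| * opNorm (S ⊗ₖ B) + opNorm E₀ := by
            rw [opNorm_smul, opNorm_smul]
    rw [abs_of_nonneg hτ'] at h3
    have h4 : τ * opNorm (B ⊗ₖ S) ≤ τ * (ε * τ) :=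
      mul_le_mul_of_nonneg_left (le_trans h1 hA1) hτ'
    have h5 : τ * opNorm (S ⊗ₖ B) ≤ τ * (ε * τ) :=
      mul_le_mul_of_nonneg_left (le_trans h2 hA1) hτ'
    nlinarith [hA2]
  have hgoal : 1 - 12 * ε ≤ (∑ p : Fin n × Fin n, v' p * u p) ^ 2 := by
    rcases htop with hL | hRt
    · have hPT : (Matrix.of fun p q : Fin n × Fin n => u p * u q)ᵀ
          = Matrix.of fun p q : Fin n × Fin n => u p * u q := by
        ext p q
        simp [Matrix.transpose_apply, mul_comm]
      have hdecompT : Mᵀ = τ ^ 2 • (Matrix.of fun p q : Fin n × Fin n => u p * u q) + Rᵀ := by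
        rw [hdecomp, Matrix.transpose_add, Matrix.transpose_smul, hPT]
      exact key_lemma u hu1 τ ε hτ hε Mᵀ Rᵀ hdecompT
        (by rw [opNorm_transpose]; exact hRnorm) v' hv' hL
    · exact key_lemma u hu1 τ ε hτ hε M R hdecomp hRnorm v' hv' hRt
  simpa only [hu] using hgoal
end
end

section
/- There is an absolute constant C > 0 such that the following holds. Let v₀ ∈ ℝⁿ and v′ ∈ ℝ^{n²} be unit vectors with ⟨v′, v₀⊗v₀⟩ ≥ 1 − ε for some ε ∈ [0, 1/C]. Let V′ be the n×n matrix with entries V′_{jk} = v′_{(j,k)}. Then any top right singular vector v of V′ (unit vector maximizing ‖V′v‖), with its sign chosen so that ⟨v, v₀⟩ ≥ 0, satisfies ⟨v, v₀⟩ ≥ 1 − C·ε. -/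
open Matrix

noncomputable section

namespace ReshapeAux

lemma sum_sq_nonneg {ι : Type*} [Fintype ι] (x : ι → ℝ) : 0 ≤ ∑ i, x i ^ 2 :=
  Finset.sum_nonneg fun _ _ => sq_nonneg _

lemma enorm2_sq {ι : Type*} [Fintype ι] (x : ι → ℝ) : enorm2 x ^ 2 = ∑ i, x i ^ 2 :=
  Real.sq_sqrt (sum_sq_nonneg x)

lemma enorm2_nonneg {ι : Type*} [Fintype ι] (x : ι → ℝ) : 0 ≤ enorm2 x := Real.sqrt_nonneg _

lemma sum_sq_of_enorm2_one {ι : Type*} [Fintype ι] {x : ι → ℝ} (h : enorm2 x = 1) :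
    ∑ i, x i ^ 2 = 1 := by
  have h2 := enorm2_sq x
  rw [h] at h2
  simpa using h2.symm

lemma sq_le_of_enorm2_le {ι : Type*} [Fintype ι] {x y : ι → ℝ} (h : enorm2 x ≤ enorm2 y) :
    ∑ i, x i ^ 2 ≤ ∑ i, y i ^ 2 := by
  rw [← enorm2_sq, ← enorm2_sq]
  exact pow_le_pow_left₀ (enorm2_nonneg x) h 2

lemma sum_sq_comb {ι : Type*} [Fintype ι] (a b : ℝ) (x y : ι → ℝ) :
    ∑ i, (a * x i + b * y i) ^ 2
      = a ^ 2 * ∑ i, x i ^ 2 + 2 * a * b * (∑ i, x i * y i) + b ^ 2 * ∑ i, y i ^ 2 := by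
  rw [Finset.mul_sum, Finset.mul_sum, Finset.mul_sum, ← Finset.sum_add_distrib,
    ← Finset.sum_add_distrib]
  exact Finset.sum_congr rfl fun i _ => by ring

lemma mulVec_comb {n : ℕ} (M : Matrix (Fin n) (Fin n) ℝ) (a b : ℝ) (x y : Fin n → ℝ)
    (j : Fin n) :
    M.mulVec (fun i => a * x i + b * y i) j = a * M.mulVec x j + b * M.mulVec y j := by
  simp only [Matrix.mulVec, dotProduct]
  rw [Finset.mul_sum, Finset.mul_sum, ← Finset.sum_add_distrib]
  exact Finset.sum_congr rfl fun k _ => by ring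

lemma frob_pair {n : ℕ} (M : Matrix (Fin n) (Fin n) ℝ) {v u : Fin n → ℝ}
    (hv : ∑ i, v i ^ 2 = 1) (hu : ∑ i, u i ^ 2 = 1) (hvu : ∑ i, v i * u i = 0) :
    (∑ j, (M.mulVec v j) ^ 2) + ∑ j, (M.mulVec u j) ^ 2 ≤ ∑ j, ∑ k, (M j k) ^ 2 := by
  classical
  set E := EuclideanSpace ℝ (Fin n) with hE
  set e := WithLp.equiv 2 (Fin n → ℝ) with he
  obtain ⟨ve, hve⟩ : ∃ x : E, x = e.symm v := ⟨_, rfl⟩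
  obtain ⟨ue, hue⟩ : ∃ x : E, x = e.symm u := ⟨_, rfl⟩
  have hinner : ∀ (g : Fin n → ℝ) (x : E),
      (inner ℝ (e.symm g) x : ℝ) = ∑ k, g k * (e x) k := by
    intro g x
    simp [he, hE, PiLp.inner_apply, RCLike.inner_apply, WithLp.equiv_symm_apply,
      PiLp.toLp_apply, mul_comm]
  have hev : e ve = v := by rw [hve]; exact Equiv.apply_symm_apply _ v
  have heu : e ue = u := by rw [hue]; exact Equiv.apply_symm_apply _ u
  have hvv : (inner ℝ ve ve : ℝ) = 1 := by
    rw [hve, hinner, ← hve, hev]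
    simpa [pow_two] using hv
  have huu : (inner ℝ ue ue : ℝ) = 1 := by
    rw [hue, hinner, ← hue, heu]
    simpa [pow_two] using hu
  have hvu' : (inner ℝ ve ue : ℝ) = 0 := by
    rw [hve, hinner, heu]
    exact hvu
  have hne : ve ≠ ue := by
    intro h
    rw [h, huu] at hvu'
    norm_num at hvu'
  have hON : Orthonormal ℝ (Subtype.val : ({ve, ue} : Set E) → E) := by
    rw [orthonormal_subtype_iff_ite]
    intro a ha b hb
    simp only [Set.mem_insert_iff, Set.mem_singleton_iff] at ha hb
    rcases ha with rfl | rfl <;> rcases hb with rfl | rfl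
    · rw [if_pos rfl]; exact hvv
    · rw [if_neg hne]; exact hvu'
    · rw [if_neg (Ne.symm hne)]; rw [real_inner_comm]; exact hvu'
    · rw [if_pos rfl]; exact huu
  obtain ⟨s, b, hsub, hb⟩ := hON.exists_orthonormalBasis_extension
  have hvmem : ve ∈ s := hsub (Set.mem_insert _ _)
  have humem : ue ∈ s := hsub (Set.mem_insert_of_mem _ rfl)
  set iv : ↥(s : Set E) := ⟨ve, hvmem⟩ with hiv
  set iu : ↥(s : Set E) := ⟨ue, humem⟩ with hiu
  have hivne : iv ≠ iu := fun h => hne (congrArg Subtype.val h)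
  -- total sum over the orthonormal basis equals the Frobenius norm squared
  have htot : ∑ i : ↥(s : Set E), (∑ j, (M.mulVec (e (b i)) j) ^ 2)
      = ∑ j, ∑ k, (M j k) ^ 2 := by
    rw [Finset.sum_comm]
    refine Finset.sum_congr rfl fun j _ => ?_
    have hp := b.sum_inner_mul_inner (e.symm (M j)) (e.symm (M j))
    have h1 : ∀ i : ↥(s : Set E),
        (M.mulVec (e (b i)) j) ^ 2
          = (inner ℝ (e.symm (M j)) (b i) : ℝ) * (inner ℝ ((b i : E)) (e.symm (M j)) : ℝ) := by
      intro i
      rw [real_inner_comm (e.symm (M j)) ((b i : E)), hinner]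
      simp [Matrix.mulVec, dotProduct, pow_two]
    calc ∑ i : ↥(s : Set E), (M.mulVec (e (b i)) j) ^ 2
        = ∑ i : ↥(s : Set E),
            (inner ℝ (e.symm (M j)) (b i) : ℝ) * (inner ℝ ((b i : E)) (e.symm (M j)) : ℝ) :=
          Finset.sum_congr rfl fun i _ => h1 i
      _ = (inner ℝ (e.symm (M j)) (e.symm (M j)) : ℝ) := hp
      _ = ∑ k, M j k * (e (e.symm (M j))) k := hinner _ _
      _ = ∑ k, (M j k) ^ 2 := by
          rw [Equiv.apply_symm_apply]
          exact Finset.sum_congr rfl fun k _ => (pow_two _).symm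
  have hpairs : (∑ j, (M.mulVec (e (b iv)) j) ^ 2) + (∑ j, (M.mulVec (e (b iu)) j) ^ 2)
      ≤ ∑ i : ↥(s : Set E), (∑ j, (M.mulVec (e (b i)) j) ^ 2) := by
    have hsub2 : ({iv, iu} : Finset ↥(s : Set E)) ⊆ Finset.univ := Finset.subset_univ _
    have h := Finset.sum_le_sum_of_subset_of_nonneg hsub2
      (fun i _ _ => sum_sq_nonneg fun j => M.mulVec (e (b i)) j)
    rwa [Finset.sum_pair hivne] at h
  have hbiv : e (b iv) = v := by
    rw [hb]
    exact hev
  have hbiu : e (b iu) = u := by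
    rw [hb]
    exact heu
  rw [hbiv, hbiu] at hpairs
  rw [htot] at hpairs
  exact hpairs

end ReshapeAux

set_option maxHeartbeats 1600000 in
open ReshapeAux in
/-- if a unit vector `v′ ∈ ℝ^{n²}` has `⟨v′, v₀⊗v₀⟩ ≥ 1 - ε`, then the
top right singular vector of its `n×n` matrix reshaping, with sign chosen so that
`⟨v, v₀⟩ ≥ 0`, satisfies `⟨v, v₀⟩ ≥ 1 - Cε`. -/
theorem reshaping_recovers_signal :
    ∃ C : ℝ, 0 < C ∧
      ∀ (n : ℕ) (v₀ : Fin n → ℝ) (v' : Fin n × Fin n → ℝ) (ε : ℝ),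
        enorm2 v₀ = 1 → enorm2 v' = 1 → 0 ≤ ε → ε ≤ 1 / C →
        1 - ε ≤ ∑ p : Fin n × Fin n, v' p * (v₀ p.1 * v₀ p.2) →
        ∀ v : Fin n → ℝ, enorm2 v = 1 →
          (∀ w : Fin n → ℝ, enorm2 w = 1 →
            enorm2 ((Matrix.of fun j k => v' (j, k)).mulVec w)
              ≤ enorm2 ((Matrix.of fun j k => v' (j, k)).mulVec v)) →
          0 ≤ ∑ i, v i * v₀ i →
          1 - C * ε ≤ ∑ i, v i * v₀ i := by
  refine ⟨4, by norm_num, ?_⟩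
  intro n v₀ v' ε hv₀ hv' hε hεC hcorr v hv hmax hvv₀
  set M : Matrix (Fin n) (Fin n) ℝ := Matrix.of (fun j k => v' (j, k)) with hMdef
  have hε4 : ε ≤ 1 / 4 := by linarith only [hεC]
  have hv₀2 : ∑ i, v₀ i ^ 2 = 1 := sum_sq_of_enorm2_one hv₀
  have hv2 : ∑ i, v i ^ 2 = 1 := sum_sq_of_enorm2_one hv
  have hfrob : ∑ j, ∑ k, (M j k) ^ 2 = 1 := by
    have h := sum_sq_of_enorm2_one hv'
    rw [← h, Fintype.sum_prod_type]
    rfl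
  set c := ∑ i, v i * v₀ i with hc
  clear_value c
  have hc1 : c ≤ 1 := by
    have h := Finset.sum_mul_sq_le_sq_mul_sq Finset.univ v v₀
    rw [hv2, hv₀2, ← hc] at h
    nlinarith only [hvv₀, h]
  set σ2 := ∑ j, (M.mulVec v j) ^ 2 with hσ2def
  clear_value σ2
  have hmax' : ∀ w : Fin n → ℝ, enorm2 w = 1 → ∑ j, (M.mulVec w j) ^ 2 ≤ σ2 := by
    intro w hw
    rw [hσ2def]
    exact sq_le_of_enorm2_le (hmax w hw)
  have hσ2nn : 0 ≤ σ2 := by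
    rw [hσ2def]; exact sum_sq_nonneg _
  have hσle1 : σ2 ≤ 1 := by
    have hrow : ∀ j, (M.mulVec v j) ^ 2 ≤ (∑ k, (M j k) ^ 2) * (∑ k, v k ^ 2) := by
      intro j
      have := Finset.sum_mul_sq_le_sq_mul_sq Finset.univ (M j) v
      simpa [Matrix.mulVec, dotProduct] using this
    calc σ2 = ∑ j, (M.mulVec v j) ^ 2 := hσ2def
      _ ≤ ∑ j, (∑ k, (M j k) ^ 2) * (∑ k, v k ^ 2) :=
          Finset.sum_le_sum fun j _ => hrow j
      _ = 1 := by rw [hv2]; simpa using hfrob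
  -- the correlation equals the quadratic form of M at v₀
  have hA0 : ∑ p : Fin n × Fin n, v' p * (v₀ p.1 * v₀ p.2) = ∑ j, v₀ j * M.mulVec v₀ j := by
    rw [Fintype.sum_prod_type]
    refine Finset.sum_congr rfl fun j _ => ?_
    simp only [Matrix.mulVec, dotProduct, Finset.mul_sum]
    refine Finset.sum_congr rfl fun k _ => ?_
    simp [hMdef]
    ring
  set A := ∑ j, (M.mulVec v₀ j) ^ 2 with hAdef
  clear_value A
  have hcorr2 : (1 - ε) ^ 2 ≤ A := by
    rw [hAdef]
    have h1 : 1 - ε ≤ ∑ j, v₀ j * M.mulVec v₀ j := by rw [← hA0]; exact hcorr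
    have h2 := Finset.sum_mul_sq_le_sq_mul_sq Finset.univ v₀ (M.mulVec v₀)
    rw [hv₀2, one_mul] at h2
    nlinarith only [h1, h2, hε, hε4]
  have hAσ : A ≤ σ2 := by rw [hAdef]; exact hmax' v₀ hv₀
  have hσlb : (1 - ε) ^ 2 ≤ σ2 := le_trans hcorr2 hAσ
  -- decompose v₀ = c • v + w
  set w : Fin n → ℝ := fun i => v₀ i - c * v i with hwdef
  clear_value w
  have hcomm : ∑ i, v₀ i * v i = c := by
    rw [hc]; exact Finset.sum_congr rfl fun i _ => mul_comm _ _
  have hworth : ∑ i, v i * w i = 0 := by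
    have h1 : ∑ i, v i * w i = ∑ i, (v i * v₀ i - c * v i ^ 2) :=
      Finset.sum_congr rfl fun i _ => by simp only [hwdef]; ring
    rw [h1, Finset.sum_sub_distrib, ← Finset.mul_sum, hv2, ← hc]; ring
  have hwsq : ∑ i, w i ^ 2 = 1 - c ^ 2 := by
    have h1 : ∑ i, w i ^ 2 = ∑ i, (1 * v₀ i + (-c) * v i) ^ 2 :=
      Finset.sum_congr rfl fun i _ => by simp only [hwdef]; ring
    rw [h1, sum_sq_comb, hv₀2, hv2, hcomm]; ring
  by_cases hcs : (1 : ℝ) - c ^ 2 = 0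
  · nlinarith only [hvv₀, hc1, hε, hcs]
  · have hwnn : 0 ≤ 1 - c ^ 2 := by rw [← hwsq]; exact sum_sq_nonneg w
    have hs2pos : 0 < 1 - c ^ 2 := lt_of_le_of_ne hwnn (Ne.symm hcs)
    set s := Real.sqrt (1 - c ^ 2) with hsdef
    clear_value s
    have hspos : 0 < s := by rw [hsdef]; exact Real.sqrt_pos.2 hs2pos
    have hssq : s ^ 2 = 1 - c ^ 2 := by rw [hsdef]; exact Real.sq_sqrt hwnn
    set u : Fin n → ℝ := fun i => w i / s with hudef
    clear_value u
    have hu2 : ∑ i, u i ^ 2 = 1 := by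
      have h : ∑ i, u i ^ 2 = (∑ i, w i ^ 2) / s ^ 2 := by
        rw [Finset.sum_div]
        exact Finset.sum_congr rfl fun i _ => by simp only [hudef]; rw [div_pow]
      rw [h, hwsq, hssq, div_self hcs]
    have huorth : ∑ i, v i * u i = 0 := by
      have h : ∑ i, v i * u i = (∑ i, v i * w i) / s := by
        rw [Finset.sum_div]
        exact Finset.sum_congr rfl fun i _ => by simp only [hudef]; ring
      rw [h, hworth, zero_div]
    set q := ∑ j, (M.mulVec u j) ^ 2 with hqdef
    clear_value q
    have hq0 : 0 ≤ q := by rw [hqdef]; exact sum_sq_nonneg _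
    have hqbound : q ≤ 1 - σ2 := by
      have h := frob_pair M hv2 hu2 huorth
      rw [hfrob, ← hσ2def, ← hqdef] at h
      linarith only [h]
    set r := ∑ j, (M.mulVec v j) * (M.mulVec u j) with hrdef
    clear_value r
    -- key: near-maximality in every direction forces r = 0
    have key : ∀ t : ℝ, 2 * t * r ≤ t ^ 2 * (σ2 - q) := by
      intro t
      have ht : (0:ℝ) < 1 + t ^ 2 := by positivity
      set a := (Real.sqrt (1 + t ^ 2))⁻¹ with hadef
      clear_value a
      have ha2 : a ^ 2 = (1 + t ^ 2)⁻¹ := by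
        rw [hadef, inv_pow, Real.sq_sqrt ht.le]
      have hxnorm : enorm2 (fun i => a * v i + (a * t) * u i) = 1 := by
        unfold enorm2
        rw [sum_sq_comb a (a * t) v u, hv2, hu2, huorth]
        rw [show a ^ 2 * 1 + 2 * a * (a * t) * 0 + (a * t) ^ 2 * 1
            = a ^ 2 * (1 + t ^ 2) by ring, ha2, inv_mul_cancel₀ ht.ne']
        exact Real.sqrt_one
      have hle := hmax' _ hxnorm
      have hsum : ∑ j, (M.mulVec (fun i => a * v i + (a * t) * u i) j) ^ 2
          = a ^ 2 * σ2 + 2 * a * (a * t) * r + (a * t) ^ 2 * q := by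
        calc ∑ j, (M.mulVec (fun i => a * v i + (a * t) * u i) j) ^ 2
            = ∑ j, (a * M.mulVec v j + (a * t) * M.mulVec u j) ^ 2 :=
              Finset.sum_congr rfl fun j _ => by rw [mulVec_comb]
          _ = a ^ 2 * (∑ j, (M.mulVec v j) ^ 2)
              + 2 * a * (a * t) * (∑ j, M.mulVec v j * M.mulVec u j)
              + (a * t) ^ 2 * (∑ j, (M.mulVec u j) ^ 2) := sum_sq_comb a (a * t) _ _
          _ = _ := by rw [← hσ2def, ← hrdef, ← hqdef]
      rw [hsum] at hle
      have h' : σ2 + 2 * t * r + t ^ 2 * q ≤ (1 + t ^ 2) * σ2 := by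
        have hmul := mul_le_mul_of_nonneg_left hle ht.le
        have heq : (1 + t ^ 2) * (a ^ 2 * σ2 + 2 * a * (a * t) * r + (a * t) ^ 2 * q)
            = σ2 + 2 * t * r + t ^ 2 * q := by
          rw [show (1 + t ^ 2) * (a ^ 2 * σ2 + 2 * a * (a * t) * r + (a * t) ^ 2 * q)
              = ((1 + t ^ 2) * a ^ 2) * (σ2 + 2 * t * r + t ^ 2 * q) by ring,
            ha2, mul_inv_cancel₀ ht.ne', one_mul]
        rw [heq] at hmul
        exact hmul
      linarith only [h']
    have hr0 : r = 0 := by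
      have h1 := key r
      have hK : σ2 - q ≤ 1 := by linarith only [hσle1, hq0]
      have hr2 : r ^ 2 ≤ 0 := by nlinarith only [h1, hK, sq_nonneg r]
      have : r ^ 2 = 0 := le_antisymm hr2 (sq_nonneg r)
      exact pow_eq_zero_iff two_ne_zero |>.mp this
    -- A = c²σ2 + s²q
    have hv₀eq : v₀ = fun i => c * v i + s * u i := by
      funext i
      simp only [hudef, hwdef]
      field_simp
      ring
    have hAeq : A = c ^ 2 * σ2 + 2 * c * s * r + s ^ 2 * q := by
      calc A = ∑ j, (c * M.mulVec v j + s * M.mulVec u j) ^ 2 := by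
            rw [hAdef]
            refine Finset.sum_congr rfl fun j _ => ?_
            rw [show M.mulVec v₀ j = M.mulVec (fun i => c * v i + s * u i) j by rw [← hv₀eq],
              mulVec_comb]
        _ = c ^ 2 * (∑ j, (M.mulVec v j) ^ 2)
            + 2 * c * s * (∑ j, M.mulVec v j * M.mulVec u j)
            + s ^ 2 * (∑ j, (M.mulVec u j) ^ 2) := sum_sq_comb c s _ _
        _ = _ := by rw [← hσ2def, ← hrdef, ← hqdef]
    rw [hr0] at hAeq
    -- conclude
    rcases le_or_gt (1 / 2 : ℝ) (c ^ 2) with hcase | hcase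
    · have hp1 : (1 - c ^ 2) * q ≤ (1 - c ^ 2) * (1 - σ2) :=
        mul_le_mul_of_nonneg_left hqbound hwnn
      have hp2 : 0 ≤ (2 * c ^ 2 - 1) * (1 - σ2) :=
        mul_nonneg (by linarith) (by linarith)
      have hp0 : s ^ 2 * q = (1 - c ^ 2) * q := by rw [hssq]
      have hcc : (1 - ε) ^ 2 ≤ c ^ 2 := by
        nlinarith only [hcorr2, hAeq, hp0, hp1, hp2]
      nlinarith only [hcc, hvv₀, hε, hε4, sq_nonneg (c - (1 - ε)), sq_nonneg (c + 1 - ε)]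
    · exfalso
      have hp1 : (1 - c ^ 2) * q ≤ (1 - c ^ 2) * (1 - σ2) :=
        mul_le_mul_of_nonneg_left hqbound hwnn
      have hp3 : (2 * c ^ 2 - 1) * (σ2 - (1 - ε) ^ 2) ≤ 0 :=
        mul_nonpos_of_nonpos_of_nonneg (by linarith) (by linarith)
      have hp4 : (9 : ℝ) / 16 ≤ (1 - ε) ^ 2 := by nlinarith only [hε, hε4]
      have hp0 : s ^ 2 * q = (1 - c ^ 2) * q := by rw [hssq]
      have hp5 : (9 : ℝ) / 16 * (2 - 2 * c ^ 2) ≤ (1 - ε) ^ 2 * (2 - 2 * c ^ 2) :=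
        mul_le_mul_of_nonneg_right hp4 (by linarith only [hcase])
      nlinarith only [hcorr2, hAeq, hp0, hp1, hp3, hp5, hcase]
end
end

section
/- There is an absolute constant C > 0 such that the following holds. Let n ∈ ℕ, τ > 0, ε ∈ (0, 1/C), let v₀ ∈ ℝⁿ be a unit vector, and let A ∈ ℝ^{n²×n}. Let T = τ·(v₀⊗v₀)v₀ᵀ + A ∈ ℝ^{n²×n}. Suppose AᵀA = c₀·Id_{n×n} + E for some c₀ ≥ 0 and some matrix E with ‖E‖ ≤ ε·τ², and suppose ‖Aᵀ(v₀⊗v₀)‖ ≤ ε·τ. Then any unit-norm top eigenvector u of the n×n matrix TᵀT satisfies ⟨v₀, u⟩² ≥ 1 − C·ε. -/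
open Matrix

noncomputable section

lemma euclid_norm_eq {n : ℕ} (x : Fin n → ℝ) :
    ‖(WithLp.equiv 2 (Fin n → ℝ)).symm x‖ = enorm2 x := by
  rw [EuclideanSpace.norm_eq, enorm2]
  congr 1
  refine Finset.sum_congr rfl fun i _ => ?_
  simp [Real.norm_eq_abs, sq_abs]

lemma euclid_inner_eq {n : ℕ} (x y : Fin n → ℝ) :
    (inner ℝ ((WithLp.equiv 2 (Fin n → ℝ)).symm x) ((WithLp.equiv 2 (Fin n → ℝ)).symm y) : ℝ)
      = x ⬝ᵥ y := by
  rw [PiLp.inner_apply]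
  simp [dotProduct, mul_comm]

lemma quad_abs_le {n : ℕ} (M : Matrix (Fin n) (Fin n) ℝ) (x : Fin n → ℝ) :
    |x ⬝ᵥ M.mulVec x| ≤ opNorm M * (enorm2 x) ^ 2 := by
  set L := LinearMap.toContinuousLinearMap (Matrix.toEuclideanLin M) with hL
  set x' := (WithLp.equiv 2 (Fin n → ℝ)).symm x with hx'
  have hLx : L x' = (WithLp.equiv 2 (Fin n → ℝ)).symm (M.mulVec x) := by
    simp [hL, hx', Matrix.toEuclideanLin_apply_piLp_toLp]
  have h1 : x ⬝ᵥ M.mulVec x = (inner ℝ x' (L x') : ℝ) := by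
    rw [hLx, euclid_inner_eq]
  rw [h1]
  calc |(inner ℝ x' (L x') : ℝ)| ≤ ‖x'‖ * ‖L x'‖ := abs_real_inner_le_norm _ _
    _ ≤ ‖x'‖ * (‖L‖ * ‖x'‖) := by
        gcongr
        exact L.le_opNorm x'
    _ = ‖L‖ * ‖x'‖ ^ 2 := by ring
    _ = opNorm M * (enorm2 x) ^ 2 := by rw [euclid_norm_eq]; rfl

lemma rayleigh_le_top {n : ℕ} (B : Matrix (Fin n) (Fin n) ℝ) (hB : B.IsHermitian)
    (x : Fin n → ℝ) (hx : enorm2 x = 1) {t : ℝ}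
    (htop : ∀ (s : ℝ) (w : Fin n → ℝ), w ≠ 0 → B.mulVec w = s • w → s ≤ t) :
    x ⬝ᵥ B.mulVec x ≤ t := by
  set L := LinearMap.toContinuousLinearMap (Matrix.toEuclideanLin B) with hLdef
  have hsa : IsSelfAdjoint L := by
    rw [ContinuousLinearMap.isSelfAdjoint_iff_isSymmetric]
    have h := (Matrix.isHermitian_iff_isSymmetric).mp hB
    simpa [hLdef] using h
  set x' := (WithLp.equiv 2 (Fin n → ℝ)).symm x with hx'def
  have hx'1 : ‖x'‖ = 1 := by rw [hx'def, euclid_norm_eq, hx]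
  have hsph : x' ∈ Metric.sphere (0 : EuclideanSpace ℝ (Fin n)) 1 := by
    simp [mem_sphere_zero_iff_norm, hx'1]
  obtain ⟨x₀, hx₀mem, hmax⟩ := (isCompact_sphere (0 : EuclideanSpace ℝ (Fin n)) 1).exists_isMaxOn
    ⟨x', hsph⟩ L.reApplyInnerSelf_continuous.continuousOn
  have hx₀norm : ‖x₀‖ = 1 := mem_sphere_zero_iff_norm.mp hx₀mem
  have hx₀ne : x₀ ≠ 0 := by
    intro h; rw [h] at hx₀norm; simp at hx₀norm
  have hmax' : IsMaxOn L.reApplyInnerSelf (Metric.sphere 0 ‖x₀‖) x₀ := by rwa [hx₀norm]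
  have hev := hsa.hasEigenvector_of_isMaxOn hx₀ne hmax'
  obtain ⟨μ, hμ⟩ : ∃ μ : ℝ, L x₀ = μ • x₀ := ⟨_, hev.apply_eq_smul⟩
  set y₀ : Fin n → ℝ := (WithLp.equiv 2 (Fin n → ℝ)) x₀ with hy₀
  have hy₀ne : y₀ ≠ 0 := by
    simpa [hy₀] using hx₀ne
  have hBy₀ : B.mulVec y₀ = μ • y₀ := by
    have := congrArg (WithLp.equiv 2 (Fin n → ℝ)) hμ
    simpa [hy₀, Matrix.ofLp_toEuclideanLin_apply, hLdef] using this
  have hμt : μ ≤ t := htop μ y₀ hy₀ne hBy₀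
  have hray : x ⬝ᵥ B.mulVec x ≤ μ := by
    have h1 : L.reApplyInnerSelf x' ≤ L.reApplyInnerSelf x₀ := hmax hsph
    have h2 : L.reApplyInnerSelf x' = x ⬝ᵥ B.mulVec x := by
      rw [ContinuousLinearMap.reApplyInnerSelf_apply]
      have hLx : L x' = (WithLp.equiv 2 (Fin n → ℝ)).symm (B.mulVec x) := by
        simp [hLdef, hx'def, Matrix.toEuclideanLin_apply_piLp_toLp]
      rw [real_inner_comm, hLx, hx'def, euclid_inner_eq]
      simp
    have h3 : L.reApplyInnerSelf x₀ = μ := by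
      rw [ContinuousLinearMap.reApplyInnerSelf_apply, hμ, real_inner_smul_left]
      have hxx : (inner ℝ x₀ x₀ : ℝ) = 1 := by
        rw [real_inner_self_eq_norm_sq, hx₀norm]; norm_num
      simp [hxx, hx₀norm]
    linarith [h1, h2.symm.le, h3.le]
  linarith

lemma sqrt_one_sq {S : ℝ} (h0 : 0 ≤ S) (h : Real.sqrt S = 1) : S = 1 := by
  have := Real.sq_sqrt h0
  rw [h] at this; linarith

set_option maxHeartbeats 1000000 in
/-- for `T = τ (v₀⊗v₀)v₀ᵀ + A` with `AᵀA = c₀ Id + E`, `‖E‖ ≤ ετ²` and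
`‖Aᵀ(v₀⊗v₀)‖ ≤ ετ`, any unit top eigenvector `u` of `TᵀT` has `⟨v₀,u⟩² ≥ 1 - Cε`. -/
theorem tensor_unfolding_top_eigenvector :
    ∃ C : ℝ, 0 < C ∧
      ∀ (n : ℕ) (τ ε : ℝ) (v₀ : Fin n → ℝ) (A : Matrix (Fin n × Fin n) (Fin n) ℝ),
        0 < τ → 0 < ε → ε < 1 / C → (∑ i, v₀ i ^ 2) = 1 →
        (∃ (c₀ : ℝ) (Em : Matrix (Fin n) (Fin n) ℝ), 0 ≤ c₀ ∧
          Aᵀ * A = c₀ • (1 : Matrix (Fin n) (Fin n) ℝ) + Em ∧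
          opNorm Em ≤ ε * τ ^ 2) →
        enorm2 (Aᵀ.mulVec fun p : Fin n × Fin n => v₀ p.1 * v₀ p.2) ≤ ε * τ →
        ∀ T : Matrix (Fin n × Fin n) (Fin n) ℝ,
          T = Matrix.of (fun p i => τ * v₀ p.1 * v₀ p.2 * v₀ i + A p i) →
          ∀ u : Fin n → ℝ, enorm2 u = 1 →
            (∃ t : ℝ, (Tᵀ * T).mulVec u = t • u ∧
              ∀ (s : ℝ) (w : Fin n → ℝ), w ≠ 0 → (Tᵀ * T).mulVec w = s • w → s ≤ t) →
            1 - C * ε ≤ (∑ i, v₀ i * u i) ^ 2 := by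
  refine ⟨6, by norm_num, ?_⟩
  intro n τ ε v₀ A hτ hε hεC hv₀ hexists hwbound T hT u hu htope
  obtain ⟨c₀, Em, hc₀, hATA, hEm⟩ := hexists
  obtain ⟨t, htu, htop⟩ := htope
  set vv : Fin n × Fin n → ℝ := fun p => v₀ p.1 * v₀ p.2 with hvvdef
  set w : Fin n → ℝ := Aᵀ.mulVec vv with hwdef
  -- basic normalizations
  have hvnorm : v₀ ⬝ᵥ v₀ = 1 := by
    rw [dotProduct]
    rw [← hv₀]
    exact Finset.sum_congr rfl fun i _ => (sq (v₀ i)).symm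
  have huu : ∑ i, u i ^ 2 = 1 :=
    sqrt_one_sq (Finset.sum_nonneg fun _ _ => sq_nonneg _) hu
  have huu' : u ⬝ᵥ u = 1 := by
    rw [dotProduct, ← huu]
    exact Finset.sum_congr rfl fun i _ => (sq (u i)).symm
  have hvv1 : vv ⬝ᵥ vv = 1 := by
    have : vv ⬝ᵥ vv = (∑ i, v₀ i ^ 2) * (∑ j, v₀ j ^ 2) := by
      rw [Finset.sum_mul_sum Finset.univ Finset.univ (fun i => v₀ i ^ 2) (fun j => v₀ j ^ 2),
        dotProduct, Fintype.sum_prod_type]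
      refine Finset.sum_congr rfl fun i _ => Finset.sum_congr rfl fun j _ => ?_
      simp [hvvdef]; ring
    rw [this, hv₀]; norm_num
  -- T.mulVec decomposition
  have hTmul : ∀ x : Fin n → ℝ, T.mulVec x = (τ * (v₀ ⬝ᵥ x)) • vv + A.mulVec x := by
    intro x; funext p
    simp only [hT, Matrix.mulVec, dotProduct, Matrix.of_apply, Pi.add_apply, Pi.smul_apply,
      smul_eq_mul]
    calc ∑ i, (τ * v₀ p.1 * v₀ p.2 * v₀ i + A p i) * x i
        = ∑ i, (τ * v₀ p.1 * v₀ p.2 * (v₀ i * x i) + A p i * x i) :=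
          Finset.sum_congr rfl fun i _ => by ring
      _ = τ * v₀ p.1 * v₀ p.2 * (∑ i, v₀ i * x i) + ∑ i, A p i * x i := by
          rw [Finset.sum_add_distrib, Finset.mul_sum]
      _ = τ * (∑ i, v₀ i * x i) * vv p + ∑ i, A p i * x i := by
          simp only [hvvdef]; ring
  -- quadratic form of TᵀT
  have hq : ∀ x : Fin n → ℝ, x ⬝ᵥ (Tᵀ * T).mulVec x =
      τ ^ 2 * (v₀ ⬝ᵥ x) ^ 2 + 2 * τ * (v₀ ⬝ᵥ x) * (w ⬝ᵥ x) + c₀ * (x ⬝ᵥ x)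
        + x ⬝ᵥ Em.mulVec x := by
    intro x
    have h1 : x ⬝ᵥ (Tᵀ * T).mulVec x = (T.mulVec x) ⬝ᵥ (T.mulVec x) := by
      rw [← Matrix.mulVec_mulVec, Matrix.dotProduct_mulVec, Matrix.vecMul_transpose]
    have h2 : (A.mulVec x) ⬝ᵥ (A.mulVec x) = c₀ * (x ⬝ᵥ x) + x ⬝ᵥ Em.mulVec x := by
      have h2a : x ⬝ᵥ (Aᵀ * A).mulVec x = (A.mulVec x) ⬝ᵥ (A.mulVec x) := by
        rw [← Matrix.mulVec_mulVec, Matrix.dotProduct_mulVec, Matrix.vecMul_transpose]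
      rw [← h2a, hATA, Matrix.add_mulVec, Matrix.smul_mulVec, Matrix.one_mulVec,
        dotProduct_add, dotProduct_smul, smul_eq_mul]
    have h3 : vv ⬝ᵥ (A.mulVec x) = w ⬝ᵥ x := by
      rw [Matrix.dotProduct_mulVec, hwdef, Matrix.mulVec_transpose]
    rw [h1, hTmul]
    rw [add_dotProduct, dotProduct_add, dotProduct_add, smul_dotProduct, smul_dotProduct,
      dotProduct_smul, dotProduct_smul, smul_eq_mul, smul_eq_mul, smul_eq_mul, h2, h3, hvv1,
      dotProduct_comm (A.mulVec x) vv, h3]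
    simp only [smul_eq_mul]
    ring
  -- Cauchy–Schwarz bounds for w
  have hwbd : ∀ x : Fin n → ℝ, (∑ i, x i ^ 2) = 1 → |w ⬝ᵥ x| ≤ ε * τ := by
    intro x hx
    have hwn : ∑ i, w i ^ 2 ≤ (ε * τ) ^ 2 := by
      have h0 : (0 : ℝ) ≤ ∑ i, w i ^ 2 := Finset.sum_nonneg fun _ _ => sq_nonneg _
      have h1 : Real.sqrt (∑ i, w i ^ 2) ≤ ε * τ := hwbound
      have := Real.sq_sqrt h0
      nlinarith [Real.sqrt_nonneg (∑ i, w i ^ 2)]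
    have hcs := Finset.sum_mul_sq_le_sq_mul_sq Finset.univ w x
    have h2 : (w ⬝ᵥ x) ^ 2 ≤ (ε * τ) ^ 2 := by
      rw [dotProduct]
      calc (∑ i, w i * x i) ^ 2 ≤ (∑ i, w i ^ 2) * (∑ i, x i ^ 2) := hcs
        _ = ∑ i, w i ^ 2 := by rw [hx, mul_one]
        _ ≤ (ε * τ) ^ 2 := hwn
    have h3 := Real.sqrt_le_sqrt h2
    rwa [Real.sqrt_sq_eq_abs, Real.sqrt_sq (by positivity)] at h3
  have ha1 : |v₀ ⬝ᵥ u| ≤ 1 := by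
    have hcs := Finset.sum_mul_sq_le_sq_mul_sq Finset.univ v₀ u
    have h2 : (v₀ ⬝ᵥ u) ^ 2 ≤ 1 := by
      rw [dotProduct]
      calc (∑ i, v₀ i * u i) ^ 2 ≤ (∑ i, v₀ i ^ 2) * (∑ i, u i ^ 2) := hcs
        _ = 1 := by rw [hv₀, huu, mul_one]
    have h3 := Real.sqrt_le_sqrt h2
    rwa [Real.sqrt_sq_eq_abs, Real.sqrt_one] at h3
  -- Em bounds
  have hEmbd : ∀ x : Fin n → ℝ, enorm2 x = 1 → |x ⬝ᵥ Em.mulVec x| ≤ ε * τ ^ 2 := by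
    intro x hx
    have := quad_abs_le Em x
    rw [hx] at this
    calc |x ⬝ᵥ Em.mulVec x| ≤ opNorm Em * 1 ^ 2 := this
      _ = opNorm Em := by ring
      _ ≤ ε * τ ^ 2 := hEm
  have hv₀n : enorm2 v₀ = 1 := by rw [enorm2, hv₀, Real.sqrt_one]
  -- Rayleigh: q(v₀) ≤ t
  have hherm : (Tᵀ * T).IsHermitian := by
    have h := Matrix.isHermitian_conjTranspose_mul_self T
    rwa [Matrix.conjTranspose_eq_transpose_of_trivial] at h
  have hqv : v₀ ⬝ᵥ (Tᵀ * T).mulVec v₀ ≤ t := rayleigh_le_top _ hherm v₀ hv₀n htop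
  -- q(u) = t
  have hqu : u ⬝ᵥ (Tᵀ * T).mulVec u = t := by
    rw [htu, dotProduct_smul, smul_eq_mul, huu', mul_one]
  -- put it together
  rw [hq, hvnorm] at hqv
  rw [hq, huu'] at hqu
  set a := v₀ ⬝ᵥ u with hadef
  set b := w ⬝ᵥ u with hbdef
  set b0 := w ⬝ᵥ v₀ with hb0def
  set eu := u ⬝ᵥ Em.mulVec u with heudef
  set e0 := v₀ ⬝ᵥ Em.mulVec v₀ with he0def
  have hb : |b| ≤ ε * τ := hwbd u huu
  have hb0 : |b0| ≤ ε * τ := hwbd v₀ hv₀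
  have heu : |eu| ≤ ε * τ ^ 2 := hEmbd u hu
  have he0 : |e0| ≤ ε * τ ^ 2 := hEmbd v₀ hv₀n
  rw [abs_le] at hb hb0 heu he0 ha1
  have hgoal : (∑ i, v₀ i * u i) = a := rfl
  rw [hgoal]
  -- key: τ² a² ≥ τ² (1-6ε)
  have hab : -(ε * τ) ≤ a * b := by nlinarith [hb.1, hb.2, ha1.1, ha1.2]
  have hab2 : a * b ≤ ε * τ := by nlinarith [hb.1, hb.2, ha1.1, ha1.2]
  have hstep : τ ^ 2 * (1 - 6 * ε) ≤ τ ^ 2 * a ^ 2 := by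
    nlinarith [hqv, hqu, mul_nonneg hτ.le (show (0:ℝ) ≤ b0 + ε * τ by linarith),
      mul_nonneg hτ.le (show (0:ℝ) ≤ ε * τ - a * b by linarith),
      mul_nonneg hτ.le (show (0:ℝ) ≤ a * b + ε * τ by linarith)]
  have hτ2 : (0:ℝ) < τ ^ 2 := by positivity
  nlinarith [hstep, hτ2]
end
end
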